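/- arXiv:2501.05380 — 6 statements merged into one kernel-verified Lean document; each statement's English description precedes it below -/
import Mathlib

section
/- Let Z be a finite type with at least two elements and let P be a row-stochastic matrix on Z. Then the coefficient of ergodicity of P, defined as the supremum of ‖v P‖_TV over all vectors v : Z → ℝ satisfying ∑_{z∈Z} v z = 0 and ‖v‖_TV = 1, equals the Dobrushin coefficient δ(P) = 1 − min_{z₁,z₂∈Z} ∑_{z∈Z} min(P z₁ z, P z₂ z). -/
open Finset

/-- Total variation norm of a signed vector on a finite type. -/
noncomputable def tvNorm {Z : Type*} [Fintype Z] (v : Z → ℝ) : ℝ :=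
  (1 / 2) * ∑ z, |v z|

/-- Row action of a matrix on a row vector. -/
noncomputable def rowMul {Z : Type*} [Fintype Z] (v : Z → ℝ) (P : Z → Z → ℝ) : Z → ℝ :=
  fun z' => ∑ z, v z * P z z'

/-- Dobrushin coefficient of a matrix. -/
noncomputable def dobrushin {Z : Type*} [Fintype Z] (P : Z → Z → ℝ) : ℝ :=
  1 - ⨅ p : Z × Z, ∑ z, min (P p.1 z) (P p.2 z)

private lemma abs_sub_eq_add_sub_two_min (a b : ℝ) : |a - b| = a + b - 2 * min a b := by
  rcases le_total a b with h | h
  · rw [min_eq_left h, abs_of_nonpos (by linarith)]; ring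
  · rw [min_eq_right h, abs_of_nonneg (by linarith)]; ring

private lemma max_sub_max_neg (a : ℝ) : max a 0 - max (-a) 0 = a := by
  rcases le_total a 0 with h | h
  · rw [max_eq_right h, max_eq_left (by linarith)]; ring
  · rw [max_eq_left h, max_eq_right (by linarith)]; ring

private lemma max_add_max_neg (a : ℝ) : max a 0 + max (-a) 0 = |a| := by
  rcases le_total a 0 with h | h
  · rw [max_eq_right h, max_eq_left (by linarith), abs_of_nonpos h]; ring
  · rw [max_eq_left h, max_eq_right (by linarith), abs_of_nonneg h]; ring

/-- The coefficient of ergodicity of a row-stochastic matrix equals its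
Dobrushin coefficient. -/
theorem coefficient_of_ergodicity_eq_dobrushin
    {Z : Type*} [Fintype Z] (hZ : 2 ≤ Fintype.card Z)
    (P : Z → Z → ℝ) (hP0 : ∀ z z', 0 ≤ P z z') (hP1 : ∀ z, ∑ z', P z z' = 1) :
    sSup {x : ℝ | ∃ v : Z → ℝ, (∑ z, v z) = 0 ∧ tvNorm v = 1 ∧ x = tvNorm (rowMul v P)} =
      dobrushin P := by
  classical
  have hNe : Nonempty Z := Fintype.card_pos_iff.mp (by omega)
  set f : Z × Z → ℝ := fun p => ∑ z, min (P p.1 z) (P p.2 z) with hf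
  have hfle1 : ∀ p : Z × Z, f p ≤ 1 := by
    intro p
    calc f p ≤ ∑ z, P p.1 z := Finset.sum_le_sum fun z _ => min_le_left _ _
    _ = 1 := hP1 p.1
  have key : ∀ i j : Z, (1 / 2) * ∑ z, |P i z - P j z| = 1 - f (i, j) := by
    intro i j
    have h1 : ∑ z, |P i z - P j z|
        = ∑ z, (P i z + P j z - 2 * min (P i z) (P j z)) :=
      Finset.sum_congr rfl fun z _ => abs_sub_eq_add_sub_two_min _ _
    have h2 : ∑ z, (P i z + P j z - 2 * min (P i z) (P j z))
        = (∑ z, P i z) + (∑ z, P j z) - 2 * f (i, j) := by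
      rw [hf, Finset.mul_sum, ← Finset.sum_add_distrib, ← Finset.sum_sub_distrib]
    rw [h1, h2, hP1, hP1]; ring
  have hbdd : BddBelow (Set.range f) := Set.Finite.bddBelow (Set.finite_range f)
  have hinf_le : ∀ p : Z × Z, ⨅ q : Z × Z, f q ≤ f p := fun p => ciInf_le hbdd p
  have hpair : ∀ i j : Z, (1 / 2) * ∑ z, |P i z - P j z| ≤ dobrushin P := by
    intro i j
    rw [key i j, dobrushin]
    have := hinf_le (i, j)
    linarith
  -- upper bound: every element of the set is ≤ dobrushin P
  have hub : ∀ x ∈ {x : ℝ | ∃ v : Z → ℝ, (∑ z, v z) = 0 ∧ tvNorm v = 1 ∧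
      x = tvNorm (rowMul v P)}, x ≤ dobrushin P := by
    rintro x ⟨v, hsum, htv, rfl⟩
    set vp : Z → ℝ := fun z => max (v z) 0 with hvp
    set vm : Z → ℝ := fun z => max (-v z) 0 with hvm
    have hvp0 : ∀ z, 0 ≤ vp z := fun z => le_max_right _ _
    have hvm0 : ∀ z, 0 ≤ vm z := fun z => le_max_right _ _
    have hdecomp : ∀ z, v z = vp z - vm z := fun z => (max_sub_max_neg (v z)).symm
    have habs : ∀ z, |v z| = vp z + vm z := fun z => (max_add_max_neg (v z)).symm
    have e1 : (∑ z, vp z) - ∑ z, vm z = 0 := by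
      rw [← Finset.sum_sub_distrib]
      calc ∑ z, (vp z - vm z) = ∑ z, v z :=
            Finset.sum_congr rfl fun z _ => (hdecomp z).symm
        _ = 0 := hsum
    have e2 : (∑ z, vp z) + ∑ z, vm z = 2 := by
      have h3 : ∑ z, |v z| = 2 := by
        rw [tvNorm] at htv; linarith
      rw [← Finset.sum_add_distrib]
      calc ∑ z, (vp z + vm z) = ∑ z, |v z| :=
            Finset.sum_congr rfl fun z _ => (habs z).symm
        _ = 2 := h3
    have hSp : ∑ z, vp z = 1 := by linarith
    have hSm : ∑ z, vm z = 1 := by linarith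
    -- rowMul expression as a double sum
    have hrow : ∀ z', rowMul v P z' = ∑ i, ∑ j, vp i * vm j * (P i z' - P j z') := by
      intro z'
      have hA : ∑ i, vp i * P i z' = ∑ i, ∑ j, vp i * vm j * P i z' := by
        refine Finset.sum_congr rfl fun i _ => ?_
        rw [Finset.sum_congr rfl fun j _ => (by ring :
          vp i * vm j * P i z' = (vp i * P i z') * vm j), ← Finset.mul_sum, hSm, mul_one]
      have hB : ∑ j, vm j * P j z' = ∑ i, ∑ j, vp i * vm j * P j z' := by
        rw [Finset.sum_comm]
        refine Finset.sum_congr rfl fun j _ => ?_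
        rw [Finset.sum_congr rfl fun i _ => (by ring :
          vp i * vm j * P j z' = (vm j * P j z') * vp i), ← Finset.mul_sum, hSp, mul_one]
      have : rowMul v P z' = (∑ i, vp i * P i z') - ∑ j, vm j * P j z' := by
        rw [rowMul, ← Finset.sum_sub_distrib]
        exact Finset.sum_congr rfl fun z _ => by rw [hdecomp z]; ring
      rw [this, hA, hB, ← Finset.sum_sub_distrib]
      refine Finset.sum_congr rfl fun i _ => ?_
      rw [← Finset.sum_sub_distrib]
      exact Finset.sum_congr rfl fun j _ => by ring
    -- bound the TV norm of rowMul v P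
    have hboundz : ∀ z', |rowMul v P z'| ≤ ∑ i, ∑ j, vp i * vm j * |P i z' - P j z'| := by
      intro z'
      rw [hrow z']
      calc |∑ i, ∑ j, vp i * vm j * (P i z' - P j z')|
          ≤ ∑ i, |∑ j, vp i * vm j * (P i z' - P j z')| := Finset.abs_sum_le_sum_abs _ _
        _ ≤ ∑ i, ∑ j, vp i * vm j * |P i z' - P j z'| := by
            refine Finset.sum_le_sum fun i _ => ?_
            calc |∑ j, vp i * vm j * (P i z' - P j z')|
                ≤ ∑ j, |vp i * vm j * (P i z' - P j z')| := Finset.abs_sum_le_sum_abs _ _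
              _ = ∑ j, vp i * vm j * |P i z' - P j z'| := by
                  refine Finset.sum_congr rfl fun j _ => ?_
                  rw [abs_mul, abs_of_nonneg (mul_nonneg (hvp0 i) (hvm0 j))]
    have hfinal : ∑ z', |rowMul v P z'| ≤ 2 * dobrushin P := by
      calc ∑ z', |rowMul v P z'|
          ≤ ∑ z', ∑ i, ∑ j, vp i * vm j * |P i z' - P j z'| :=
            Finset.sum_le_sum fun z' _ => hboundz z'
        _ = ∑ i, ∑ j, vp i * vm j * ∑ z', |P i z' - P j z'| := by
            rw [Finset.sum_comm]
            refine Finset.sum_congr rfl fun i _ => ?_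
            rw [Finset.sum_comm]
            refine Finset.sum_congr rfl fun j _ => ?_
            rw [Finset.mul_sum]
        _ ≤ ∑ i, ∑ j, vp i * vm j * (2 * dobrushin P) := by
            refine Finset.sum_le_sum fun i _ => Finset.sum_le_sum fun j _ => ?_
            refine mul_le_mul_of_nonneg_left ?_ (mul_nonneg (hvp0 i) (hvm0 j))
            have := hpair i j
            linarith
        _ = 2 * dobrushin P := by
            have step : ∀ i : Z, ∑ j, vp i * vm j * (2 * dobrushin P)
                = vp i * (2 * dobrushin P) := by
              intro i
              rw [Finset.sum_congr rfl fun j (_ : j ∈ univ) => (by ring :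
                vp i * vm j * (2 * dobrushin P) = (vp i * (2 * dobrushin P)) * vm j),
                ← Finset.mul_sum, hSm, mul_one]
            rw [Finset.sum_congr rfl fun i (_ : i ∈ univ) => step i, ← Finset.sum_mul,
              hSp, one_mul]
    rw [tvNorm]
    linarith
  -- the Dobrushin coefficient is attained
  have hmem : dobrushin P ∈ {x : ℝ | ∃ v : Z → ℝ, (∑ z, v z) = 0 ∧ tvNorm v = 1 ∧
      x = tvNorm (rowMul v P)} := by
    obtain ⟨a, b, hab⟩ := Fintype.exists_pair_of_one_lt_card (α := Z) (by omega)
    set s : Finset (Z × Z) := Finset.univ.filter (fun p : Z × Z => p.1 ≠ p.2) with hs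
    have hsne : s.Nonempty := ⟨(a, b), by simp [hs, hab]⟩
    obtain ⟨p0, hp0mem, hp0min⟩ := Finset.exists_min_image s f hsne
    have hp0ne : p0.1 ≠ p0.2 := by
      have := hp0mem; rw [hs, Finset.mem_filter] at this; exact this.2
    have hinf : (⨅ q : Z × Z, f q) = f p0 := by
      refine le_antisymm (hinf_le p0) (le_ciInf fun q => ?_)
      by_cases h : q.1 = q.2
      · have hq1 : f q = 1 := by
          rw [hf]
          simp only [h, min_self]
          exact hP1 q.2
        rw [hq1]; exact hfle1 p0
      · exact hp0min q (by simp [hs, h])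
    refine ⟨fun z => (if z = p0.1 then (1:ℝ) else 0) - (if z = p0.2 then (1:ℝ) else 0),
      ?_, ?_, ?_⟩
    · rw [Finset.sum_sub_distrib]
      simp
    · rw [tvNorm]
      have : ∀ z, |(if z = p0.1 then (1:ℝ) else 0) - (if z = p0.2 then (1:ℝ) else 0)|
          = (if z = p0.1 then (1:ℝ) else 0) + (if z = p0.2 then (1:ℝ) else 0) := by
        intro z
        by_cases h1 : z = p0.1
        · simp [h1, hp0ne]
        · by_cases h2 : z = p0.2
          · simp [h2, Ne.symm hp0ne]
          · simp [h1, h2]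
      rw [Finset.sum_congr rfl fun z _ => this z, Finset.sum_add_distrib]
      simp
      norm_num
    · have hr : ∀ z', rowMul (fun z => (if z = p0.1 then (1:ℝ) else 0)
          - (if z = p0.2 then (1:ℝ) else 0)) P z' = P p0.1 z' - P p0.2 z' := by
        intro z'
        rw [rowMul]
        rw [Finset.sum_congr rfl fun z (_ : z ∈ univ) => (by split_ifs <;> ring :
          ((if z = p0.1 then (1:ℝ) else 0) - (if z = p0.2 then (1:ℝ) else 0)) * P z z'
            = (if z = p0.1 then P z z' else 0) - (if z = p0.2 then P z z' else 0))]
        rw [Finset.sum_sub_distrib]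
        simp
      rw [tvNorm, Finset.sum_congr rfl fun z' _ => by rw [hr z'], key p0.1 p0.2,
        dobrushin, hinf]
  have hbddA : BddAbove {x : ℝ | ∃ v : Z → ℝ, (∑ z, v z) = 0 ∧ tvNorm v = 1 ∧
      x = tvNorm (rowMul v P)} := ⟨dobrushin P, hub⟩
  exact le_antisymm (csSup_le ⟨_, hmem⟩ hub) (le_csSup hbddA hmem)
end

section
/- Let Z be a finite nonempty type and let P and P' be row-stochastic matrices on Z. Then the Dobrushin coefficient of the matrix product satisfies δ(P P') ≤ δ(P) · δ(P'), where (P P') z z'' = ∑_{z'∈Z} P z z' · P' z' z''. -/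
open Finset

private lemma min_formula (x y : ℝ) : min x y = (x + y - |x - y|) / 2 := by
  rcases le_total x y with h | h
  · rw [min_eq_left h, abs_of_nonpos (by linarith)]; ring
  · rw [min_eq_right h, abs_of_nonneg (by linarith)]; ring

private lemma sum_min_eq {Z : Type*} [Fintype Z] (a b : Z → ℝ)
    (ha : ∑ z, a z = 1) (hb : ∑ z, b z = 1) :
    ∑ z, min (a z) (b z) = 1 - (∑ z, |a z - b z|) / 2 := by
  have h : ∑ z, min (a z) (b z) = ∑ z, (a z + b z - |a z - b z|) / 2 := by
    simp_rw [min_formula]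
  rw [h, ← Finset.sum_div, Finset.sum_sub_distrib, Finset.sum_add_distrib, ha, hb]
  ring

private lemma dob_bddBelow {Z : Type*} [Fintype Z] (Q : Z → Z → ℝ)
    (hQ0 : ∀ z z', 0 ≤ Q z z') :
    BddBelow (Set.range fun p : Z × Z => ∑ z, min (Q p.1 z) (Q p.2 z)) := by
  refine ⟨0, ?_⟩
  rintro x ⟨p, rfl⟩
  exact Finset.sum_nonneg fun z _ => le_min (hQ0 _ _) (hQ0 _ _)

private lemma dob_nonneg {Z : Type*} [Fintype Z] [Nonempty Z] (Q : Z → Z → ℝ)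
    (hQ0 : ∀ z z', 0 ≤ Q z z') (hQ1 : ∀ z, ∑ z', Q z z' = 1) :
    0 ≤ dobrushin Q := by
  have p : Z × Z := Classical.arbitrary _
  have h1 : (⨅ p : Z × Z, ∑ z, min (Q p.1 z) (Q p.2 z)) ≤ ∑ z, min (Q p.1 z) (Q p.2 z) :=
    ciInf_le (dob_bddBelow Q hQ0) p
  have h2 : ∑ z, min (Q p.1 z) (Q p.2 z) ≤ 1 :=
    calc ∑ z, min (Q p.1 z) (Q p.2 z) ≤ ∑ z, Q p.1 z :=
          Finset.sum_le_sum fun z _ => min_le_left _ _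
      _ = 1 := hQ1 _
  unfold dobrushin; linarith

private lemma pair_l1_le {Z : Type*} [Fintype Z] [Nonempty Z] (Q : Z → Z → ℝ)
    (hQ0 : ∀ z z', 0 ≤ Q z z') (hQ1 : ∀ z, ∑ z', Q z z' = 1) (z z' : Z) :
    ∑ w, |Q z w - Q z' w| ≤ 2 * dobrushin Q := by
  have h1 : (⨅ p : Z × Z, ∑ w, min (Q p.1 w) (Q p.2 w)) ≤ ∑ w, min (Q z w) (Q z' w) :=
    ciInf_le (dob_bddBelow Q hQ0) (z, z')
  have h2 := sum_min_eq (Q z) (Q z') (hQ1 z) (hQ1 z')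
  unfold dobrushin
  linarith

/-- The Dobrushin coefficient is submultiplicative over the matrix product of
row-stochastic matrices. -/
theorem dobrushin_submultiplicative
    {Z : Type*} [Fintype Z] [Nonempty Z]
    (P P' : Z → Z → ℝ)
    (hP0 : ∀ z z', 0 ≤ P z z') (hP1 : ∀ z, ∑ z', P z z' = 1)
    (hP'0 : ∀ z z', 0 ≤ P' z z') (hP'1 : ∀ z, ∑ z', P' z z' = 1) :
    dobrushin (fun z z'' => ∑ z', P z z' * P' z' z'') ≤ dobrushin P * dobrushin P' := by
  set Q : Z → Z → ℝ := fun z z'' => ∑ z', P z z' * P' z' z'' with hQdef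
  have hQ1 : ∀ z, ∑ z'', Q z z'' = 1 := by
    intro z
    rw [hQdef]
    simp only
    rw [Finset.sum_comm]
    simp_rw [← Finset.mul_sum, hP'1, mul_one, hP1]
  have hdP := dob_nonneg P hP0 hP1
  have hdP' := dob_nonneg P' hP'0 hP'1
  show 1 - (⨅ p : Z × Z, ∑ w, min (Q p.1 w) (Q p.2 w)) ≤ dobrushin P * dobrushin P'
  rw [sub_le_iff_le_add, ← sub_le_iff_le_add']
  apply le_ciInf
  rintro ⟨x, y⟩
  rw [sum_min_eq (Q x) (Q y) (hQ1 x) (hQ1 y), sub_le_sub_iff_left,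
    div_le_iff₀ (by norm_num : (0:ℝ) < 2)]
  -- goal : ∑ w, |Q x w - Q y w| ≤ dobrushin P * dobrushin P' * 2
  set d : Z → ℝ := fun z => P x z - P y z with hd
  set a : Z → ℝ := fun z => max (d z) 0 with hadef
  set b : Z → ℝ := fun z => max (-d z) 0 with hbdef
  have hab : ∀ z, a z - b z = d z := by
    intro z; rcases le_total (d z) 0 with h | h
    · simp [hadef, hbdef, max_eq_right h, max_eq_left (neg_nonneg.mpr h)]
    · simp [hadef, hbdef, max_eq_left h, max_eq_right (neg_nonpos.mpr h)]
  have habs : ∀ z, a z + b z = |d z| := by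
    intro z; rcases le_total (d z) 0 with h | h
    · simp [hadef, hbdef, max_eq_right h, max_eq_left (neg_nonneg.mpr h), abs_of_nonpos h]
    · simp [hadef, hbdef, max_eq_left h, max_eq_right (neg_nonpos.mpr h), abs_of_nonneg h]
  have ha0 : ∀ z, 0 ≤ a z := fun z => le_max_right _ _
  have hb0 : ∀ z, 0 ≤ b z := fun z => le_max_right _ _
  have hdsum : ∑ z, d z = 0 := by simp [hd, Finset.sum_sub_distrib, hP1]
  set A : ℝ := ∑ z, a z with hA
  have hBA : ∑ z, b z = A := by
    have h2 : ∑ z, (a z - b z) = 0 := by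
      rw [Finset.sum_congr rfl fun z _ => hab z]; exact hdsum
    rw [Finset.sum_sub_distrib] at h2
    linarith
  have hAabs : ∑ z, |d z| = 2 * A := by
    rw [Finset.sum_congr rfl fun z (_ : z ∈ Finset.univ) => (habs z).symm,
      Finset.sum_add_distrib, hBA]; ring
  have hA0 : 0 ≤ A := Finset.sum_nonneg fun z _ => ha0 z
  have hAle : A ≤ dobrushin P := by
    have h1 : (⨅ p : Z × Z, ∑ w, min (P p.1 w) (P p.2 w)) ≤ ∑ w, min (P x w) (P y w) :=
      ciInf_le (dob_bddBelow P hP0) (x, y)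
    have h2 := sum_min_eq (P x) (P y) (hP1 x) (hP1 y)
    unfold dobrushin
    rw [h2, hAabs] at h1
    linarith
  have hQdiff : ∀ w, Q x w - Q y w = ∑ z, d z * P' z w := by
    intro w
    simp only [hQdef, hd]
    rw [← Finset.sum_sub_distrib]
    exact Finset.sum_congr rfl fun z _ => by ring
  rcases eq_or_lt_of_le hA0 with hA0' | hApos
  · -- A = 0 ⇒ d = 0
    have hd0 : ∀ z, d z = 0 := by
      intro z
      have h := (Finset.sum_eq_zero_iff_of_nonneg
        fun w (_ : w ∈ Finset.univ) => abs_nonneg (d w)).mp (by rw [hAabs, ← hA0']; ring)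
      exact abs_eq_zero.mp (h z (Finset.mem_univ z))
    have hz : ∀ w, Q x w - Q y w = 0 := fun w => by
      rw [hQdiff w]; exact Finset.sum_eq_zero fun z _ => by rw [hd0 z, zero_mul]
    simp only [hz, abs_zero, Finset.sum_const_zero]
    positivity
  · -- A > 0
    have hprod : ∀ w, (∑ z, d z * P' z w) * A
        = ∑ z, ∑ z', a z * b z' * (P' z w - P' z' w) := by
      intro w
      have e1 : ∀ z, ∑ z', a z * b z' * (P' z w - P' z' w)
          = a z * P' z w * A - a z * (∑ z', b z' * P' z' w) := by
        intro z
        rw [← hBA, Finset.mul_sum, Finset.mul_sum, ← Finset.sum_sub_distrib]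
        exact Finset.sum_congr rfl fun z' _ => by ring
      rw [Finset.sum_congr rfl fun z _ => e1 z, Finset.sum_sub_distrib,
        ← Finset.sum_mul, ← Finset.sum_mul]
      have e2 : ∑ z, d z * P' z w = ∑ z, a z * P' z w - ∑ z, b z * P' z w := by
        rw [← Finset.sum_sub_distrib]
        exact Finset.sum_congr rfl fun z _ => by rw [← hab z]; ring
      have e3 : ∑ z, b z * P' z w = ∑ z', b z' * P' z' w := rfl
      rw [e2, ← hA, e3]
      ring
    have key : (∑ w, |Q x w - Q y w|) * A ≤ 2 * dobrushin P' * A * A := by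
      rw [Finset.sum_mul]
      calc ∑ w, |Q x w - Q y w| * A
          = ∑ w, |∑ z, ∑ z', a z * b z' * (P' z w - P' z' w)| := by
            refine Finset.sum_congr rfl fun w _ => ?_
            rw [hQdiff w, ← abs_of_nonneg hA0, ← abs_mul, hprod w]
        _ ≤ ∑ w, ∑ z, ∑ z', a z * b z' * |P' z w - P' z' w| := by
            refine Finset.sum_le_sum fun w _ => ?_
            calc |∑ z, ∑ z', a z * b z' * (P' z w - P' z' w)|
                ≤ ∑ z, |∑ z', a z * b z' * (P' z w - P' z' w)| :=
                  Finset.abs_sum_le_sum_abs _ _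
              _ ≤ ∑ z, ∑ z', a z * b z' * |P' z w - P' z' w| := by
                  refine Finset.sum_le_sum fun z _ => ?_
                  calc |∑ z', a z * b z' * (P' z w - P' z' w)|
                      ≤ ∑ z', |a z * b z' * (P' z w - P' z' w)| :=
                        Finset.abs_sum_le_sum_abs _ _
                    _ = ∑ z', a z * b z' * |P' z w - P' z' w| := by
                        refine Finset.sum_congr rfl fun z' _ => ?_
                        rw [abs_mul, abs_mul, abs_of_nonneg (ha0 z), abs_of_nonneg (hb0 z')]
        _ = ∑ z, ∑ z', a z * b z' * ∑ w, |P' z w - P' z' w| := by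
            rw [Finset.sum_comm]
            refine Finset.sum_congr rfl fun z _ => ?_
            rw [Finset.sum_comm]
            refine Finset.sum_congr rfl fun z' _ => ?_
            rw [Finset.mul_sum]
        _ ≤ ∑ z, ∑ z', a z * b z' * (2 * dobrushin P') := by
            refine Finset.sum_le_sum fun z _ => Finset.sum_le_sum fun z' _ => ?_
            exact mul_le_mul_of_nonneg_left (pair_l1_le P' hP'0 hP'1 z z')
              (mul_nonneg (ha0 z) (hb0 z'))
        _ = 2 * dobrushin P' * A * A := by
            have h5 : ∀ z, ∑ z', a z * b z' * (2 * dobrushin P')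
                = a z * (2 * dobrushin P') * A := by
              intro z
              rw [← hBA, Finset.mul_sum]
              exact Finset.sum_congr rfl fun z' _ => by ring
            rw [Finset.sum_congr rfl fun z _ => h5 z, ← Finset.sum_mul, ← Finset.sum_mul, ← hA]
            ring
    have hX : ∑ w, |Q x w - Q y w| ≤ 2 * dobrushin P' * A :=
      le_of_mul_le_mul_right (by nlinarith [key]) hApos
    nlinarith [hX, hAle, hdP']
end

section
/- Let Z be a finite nonempty type, let P be a row-stochastic matrix on Z, and let λ, μ : Z → ℝ be probability vectors (nonnegative entries summing to 1). Then ‖λ P − μ P‖_TV ≤ δ(P) · ‖λ − μ‖_TV, where (v P) z' = ∑_{z∈Z} v z · P z z'. -/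
open Finset

lemma row_tv_le {Z : Type*} [Fintype Z] [Nonempty Z]
    (P : Z → Z → ℝ) (hP1 : ∀ z, ∑ z', P z z' = 1) (z1 z2 : Z) :
    ∑ z', |P z1 z' - P z2 z'| ≤ 2 * dobrushin P := by
  have h1 : ∀ z', |P z1 z' - P z2 z'| = P z1 z' + P z2 z' - 2 * min (P z1 z') (P z2 z') := by
    intro z'
    rcases le_total (P z1 z') (P z2 z') with h | h
    · rw [abs_of_nonpos (by linarith), min_eq_left h]; ring
    · rw [abs_of_nonneg (by linarith), min_eq_right h]; ring
  simp only [h1]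
  rw [Finset.sum_sub_distrib, Finset.sum_add_distrib, hP1, hP1, ← Finset.mul_sum]
  have hle : ⨅ p : Z × Z, ∑ z, min (P p.1 z) (P p.2 z) ≤ ∑ z, min (P z1 z) (P z2 z) :=
    ciInf_le (Set.Finite.bddBelow (Set.finite_range _)) (z1, z2)
  unfold dobrushin
  linarith

/-- Contraction of the total variation distance between two probability vectors
under a row-stochastic matrix, with rate the Dobrushin coefficient. -/
theorem tv_contraction_dobrushin
    {Z : Type*} [Fintype Z] [Nonempty Z]
    (P : Z → Z → ℝ) (hP0 : ∀ z z', 0 ≤ P z z') (hP1 : ∀ z, ∑ z', P z z' = 1)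
    (lam mu : Z → ℝ)
    (hlam0 : ∀ z, 0 ≤ lam z) (hlam1 : ∑ z, lam z = 1)
    (hmu0 : ∀ z, 0 ≤ mu z) (hmu1 : ∑ z, mu z = 1) :
    tvNorm (rowMul lam P - rowMul mu P) ≤ dobrushin P * tvNorm (lam - mu) := by
  set v : Z → ℝ := fun z => lam z - mu z with hv
  set c : ℝ := tvNorm (lam - mu) with hc
  have hcs : ∑ z, |v z| = 2 * c := by
    rw [hc]; unfold tvNorm; simp only [Pi.sub_apply, hv]; ring
  have hc0 : 0 ≤ c := by
    have : 0 ≤ ∑ z, |v z| := Finset.sum_nonneg fun z _ => abs_nonneg _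
    linarith
  -- positive and negative parts
  set f : Z → ℝ := fun z => max (v z) 0 with hf
  set g : Z → ℝ := fun z => max (-(v z)) 0 with hg
  have hf0 : ∀ z, 0 ≤ f z := fun z => le_max_right _ _
  have hg0 : ∀ z, 0 ≤ g z := fun z => le_max_right _ _
  have hfg : ∀ z, f z - g z = v z := by
    intro z
    rcases le_total (v z) 0 with h | h
    · simp [hf, hg, max_eq_right h, max_eq_left (neg_nonneg.mpr h)]
    · simp [hf, hg, max_eq_left h, max_eq_right (neg_nonpos.mpr h)]
  have habs : ∀ z, f z + g z = |v z| := by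
    intro z
    rcases le_total (v z) 0 with h | h
    · rw [abs_of_nonpos h]
      simp [hf, hg, max_eq_right h, max_eq_left (neg_nonneg.mpr h)]
    · rw [abs_of_nonneg h]
      simp [hf, hg, max_eq_left h, max_eq_right (neg_nonpos.mpr h)]
  have hsumv : ∑ z, v z = 0 := by
    simp only [hv, Finset.sum_sub_distrib, hlam1, hmu1, sub_self]
  have hsub : ∑ z, (f z - g z) = 0 := by
    rw [Finset.sum_congr rfl fun z _ => hfg z, hsumv]
  have hadd : ∑ z, (f z + g z) = 2 * c := by
    rw [Finset.sum_congr rfl fun z _ => habs z, hcs]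
  rw [Finset.sum_sub_distrib] at hsub
  rw [Finset.sum_add_distrib] at hadd
  have hfsum : ∑ z, f z = c := by linarith
  have hgsum : ∑ z, g z = c := by linarith
  rcases eq_or_lt_of_le hc0 with hceq | hcpos
  · -- c = 0 : lam = mu
    have hvz : ∀ z, v z = 0 := by
      intro z
      have h0 : ∑ z, |v z| = 0 := by rw [hcs, ← hceq]; ring
      have := (Finset.sum_eq_zero_iff_of_nonneg
        (fun z _ => abs_nonneg (v z))).mp h0 z (Finset.mem_univ z)
      exact abs_eq_zero.mp this
    have heq : rowMul lam P = rowMul mu P := by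
      funext z'
      unfold rowMul
      refine Finset.sum_congr rfl fun z _ => ?_
      have := hvz z
      have : lam z = mu z := by simp only [hv] at this; linarith
      rw [this]
    rw [heq, ← hceq, mul_zero]
    simp [tvNorm]
  · -- c > 0
    have key : ∀ z', c * |rowMul lam P z' - rowMul mu P z'|
        ≤ ∑ z1, ∑ z2, f z1 * g z2 * |P z1 z' - P z2 z'| := by
      intro z'
      have hD : rowMul lam P z' - rowMul mu P z' = ∑ z, v z * P z z' := by
        unfold rowMul
        rw [← Finset.sum_sub_distrib]
        exact Finset.sum_congr rfl fun z _ => by simp [hv]; ring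
      have hvP : ∑ z, v z * P z z' = ∑ z, f z * P z z' - ∑ z, g z * P z z' := by
        rw [← Finset.sum_sub_distrib]
        refine Finset.sum_congr rfl fun z _ => ?_
        rw [← hfg z]; ring
      have expand : ∑ z1, ∑ z2, f z1 * g z2 * (P z1 z' - P z2 z')
          = c * ∑ z, v z * P z z' := by
        have h2 : ∑ z1, ∑ z2, f z1 * g z2 * (P z1 z' - P z2 z')
            = ∑ z1, (f z1 * P z1 z' * (∑ z2, g z2) - f z1 * (∑ z2, g z2 * P z2 z')) := by
          refine Finset.sum_congr rfl fun z1 _ => ?_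
          rw [Finset.mul_sum, Finset.mul_sum, ← Finset.sum_sub_distrib]
          exact Finset.sum_congr rfl fun z2 _ => by ring
        rw [h2, hvP]
        rw [Finset.sum_sub_distrib, ← Finset.sum_mul, ← Finset.sum_mul, hgsum, hfsum]
        ring
      calc c * |rowMul lam P z' - rowMul mu P z'|
          = |∑ z1, ∑ z2, f z1 * g z2 * (P z1 z' - P z2 z')| := by
            rw [hD, expand, abs_mul, abs_of_pos hcpos]
        _ ≤ ∑ z1, |∑ z2, f z1 * g z2 * (P z1 z' - P z2 z')| :=
            Finset.abs_sum_le_sum_abs _ _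
        _ ≤ ∑ z1, ∑ z2, f z1 * g z2 * |P z1 z' - P z2 z'| := by
            refine Finset.sum_le_sum fun z1 _ => ?_
            refine le_trans (Finset.abs_sum_le_sum_abs _ _) ?_
            refine Finset.sum_le_sum fun z2 _ => ?_
            rw [abs_mul, abs_of_nonneg (mul_nonneg (hf0 z1) (hg0 z2))]
    have hsum : c * ∑ z', |rowMul lam P z' - rowMul mu P z'|
        ≤ 2 * dobrushin P * c ^ 2 := by
      calc c * ∑ z', |rowMul lam P z' - rowMul mu P z'|
          = ∑ z', c * |rowMul lam P z' - rowMul mu P z'| := by rw [Finset.mul_sum]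
        _ ≤ ∑ z', ∑ z1, ∑ z2, f z1 * g z2 * |P z1 z' - P z2 z'| :=
            Finset.sum_le_sum fun z' _ => key z'
        _ = ∑ z1, ∑ z2, f z1 * g z2 * ∑ z', |P z1 z' - P z2 z'| := by
            rw [Finset.sum_comm]
            refine Finset.sum_congr rfl fun z1 _ => ?_
            rw [Finset.sum_comm]
            refine Finset.sum_congr rfl fun z2 _ => ?_
            rw [Finset.mul_sum]
        _ ≤ ∑ z1, ∑ z2, f z1 * g z2 * (2 * dobrushin P) := by
            refine Finset.sum_le_sum fun z1 _ => Finset.sum_le_sum fun z2 _ => ?_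
            exact mul_le_mul_of_nonneg_left (row_tv_le P hP1 z1 z2)
              (mul_nonneg (hf0 z1) (hg0 z2))
        _ = 2 * dobrushin P * c ^ 2 := by
            simp only [← Finset.sum_mul, ← Finset.mul_sum]
            rw [hfsum, hgsum]; ring
    have hfin : ∑ z', |rowMul lam P z' - rowMul mu P z'| ≤ 2 * dobrushin P * c := by
      have := (mul_le_mul_iff_right₀ hcpos).mp (by linarith [hsum] : c * ∑ z', |rowMul lam P z' - rowMul mu P z'| ≤ c * (2 * dobrushin P * c))
      linarith
    unfold tvNorm
    simp only [Pi.sub_apply]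
    linarith
end

section
/- Let (Ω, F, ℙ) be a probability space with a filtration (G_i)_{i∈ℕ}, let τ ≥ 1 and n ≥ 1 be natural numbers, and let B > 0. For each s ∈ {0, …, τ−1} and i ∈ {0, …, n−1}, let m_{i,s} be a random variable such that m_{i,s} is G_{i+1}-measurable, |m_{i,s}| ≤ B almost surely, and E[m_{i,s} | G_i] = 0 almost surely. Then for every a > 0, ℙ( max_{1 ≤ k ≤ n} | ∑_{s=0}^{τ−1} ∑_{i=0}^{k−1} m_{i,s} | ≥ a ) ≤ 2τ · exp( −a² / (2 τ² n B²) ). -/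
open MeasureTheory Finset

section AzumaAux
open Real

lemma exp_le_interp {B x c : ℝ} (hB : 0 < B) (hx : |x| ≤ B) :
    Real.exp (c * x) ≤ Real.cosh (c * B) + Real.sinh (c * B) / B * x := by
  obtain ⟨h1, h2⟩ := abs_le.1 hx
  have key := convexOn_exp.2 (Set.mem_univ (-(c * B))) (Set.mem_univ (c * B))
    (show (0:ℝ) ≤ (B - x) / (2 * B) by apply div_nonneg <;> linarith)
    (show (0:ℝ) ≤ (B + x) / (2 * B) by apply div_nonneg <;> linarith)
    (by field_simp; ring)
  simp only [smul_eq_mul] at key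
  have e1 : (B - x) / (2 * B) * -(c * B) + (B + x) / (2 * B) * (c * B) = c * x := by
    field_simp; ring
  have e2 : (B - x) / (2 * B) * Real.exp (-(c * B)) + (B + x) / (2 * B) * Real.exp (c * B)
      = Real.cosh (c * B) + Real.sinh (c * B) / B * x := by
    rw [Real.cosh_eq, Real.sinh_eq]; field_simp; ring
  rw [e1, e2] at key
  exact key

section Cond
variable {Ω : Type*} {F : MeasurableSpace Ω} {μ : Measure Ω} [IsProbabilityMeasure μ]
  {G : MeasurableSpace Ω} {X : Ω → ℝ} {B : ℝ}

lemma int_of_bdd (hXm : StronglyMeasurable[F] X) (hB : 0 < B)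
    (hXb : ∀ᵐ ω ∂μ, |X ω| ≤ B) : Integrable X μ :=
  (integrable_const B).mono' hXm.aestronglyMeasurable
    (hXb.mono fun ω h => by rwa [Real.norm_eq_abs])

lemma exp_int_of_bdd (hXm : StronglyMeasurable[F] X) (hB : 0 < B)
    (hXb : ∀ᵐ ω ∂μ, |X ω| ≤ B) (c : ℝ) :
    Integrable (fun ω => Real.exp (c * X ω)) μ := by
  refine (integrable_const (Real.exp (|c| * B))).mono'
    (Real.continuous_exp.comp_stronglyMeasurable (hXm.const_mul c)).aestronglyMeasurable
    (hXb.mono fun ω h => ?_)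
  rw [Real.norm_eq_abs, abs_of_pos (Real.exp_pos _)]
  refine Real.exp_le_exp.2 (le_trans (le_abs_self _) ?_)
  rw [abs_mul]
  exact mul_le_mul_of_nonneg_left h (abs_nonneg c)

lemma condexp_exp_upper (hG : G ≤ F) (hXm : StronglyMeasurable[F] X) (hB : 0 < B)
    (hXb : ∀ᵐ ω ∂μ, |X ω| ≤ B) (hXc : μ[X | G] =ᵐ[μ] 0) (c : ℝ) :
    μ[fun ω => Real.exp (c * X ω) | G] ≤ᵐ[μ] fun _ => Real.exp (c^2 * B^2 / 2) := by
  have hXint : Integrable X μ := int_of_bdd hXm hB hXb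
  have hexpint := exp_int_of_bdd hXm hB hXb c
  have hrhsint : Integrable (fun ω => Real.cosh (c*B) + Real.sinh (c*B)/B * X ω) μ :=
    (integrable_const _).add (hXint.const_mul _)
  have hle : (fun ω => Real.exp (c * X ω)) ≤ᵐ[μ]
      fun ω => Real.cosh (c*B) + Real.sinh (c*B)/B * X ω :=
    hXb.mono fun ω h => exp_le_interp hB h
  have h1 := condExp_mono (μ := μ) (m := G) hexpint hrhsint hle
  have h2 : μ[fun ω => Real.cosh (c*B) + Real.sinh (c*B)/B * X ω | G]
      =ᵐ[μ] fun _ => Real.cosh (c*B) := by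
    have hfun : (fun ω => Real.cosh (c*B) + Real.sinh (c*B)/B * X ω)
        = (fun _ => Real.cosh (c*B)) + (Real.sinh (c*B)/B) • X := by
      funext ω; simp [smul_eq_mul]
    rw [hfun]
    refine (condExp_add (integrable_const _) (hXint.smul _) G).trans ?_
    have h3 := condExp_smul (μ := μ) (m := G) (Real.sinh (c*B)/B) X
    have hc0 := condExp_const (μ := μ) hG (Real.cosh (c*B))
    filter_upwards [h3, hXc] with ω ha hb
    simp only [Pi.add_apply, hc0, ha, Pi.smul_apply, hb, Pi.zero_apply, smul_eq_mul,
      mul_zero, add_zero]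
  filter_upwards [h1, h2] with ω ha hb
  refine le_trans (ha.trans_eq hb) ?_
  calc Real.cosh (c*B) ≤ Real.exp ((c*B)^2/2) := Real.cosh_le_exp_half_sq _
    _ = Real.exp (c^2*B^2/2) := by ring_nf

lemma condexp_exp_lower (hG : G ≤ F) (hXm : StronglyMeasurable[F] X) (hB : 0 < B)
    (hXb : ∀ᵐ ω ∂μ, |X ω| ≤ B) (hXc : μ[X | G] =ᵐ[μ] 0) (c : ℝ) :
    (fun _ => (1:ℝ)) ≤ᵐ[μ] μ[fun ω => Real.exp (c * X ω) | G] := by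
  have hXint : Integrable X μ := int_of_bdd hXm hB hXb
  have hexpint := exp_int_of_bdd hXm hB hXb c
  have hlhsint : Integrable (fun ω => 1 + c * X ω) μ :=
    (integrable_const _).add (hXint.const_mul _)
  have hle : (fun ω => 1 + c * X ω) ≤ᵐ[μ] fun ω => Real.exp (c * X ω) :=
    Filter.Eventually.of_forall fun ω => by
      dsimp only; linarith [Real.add_one_le_exp (c * X ω)]
  have h1 := condExp_mono (μ := μ) (m := G) hlhsint hexpint hle
  have h2 : μ[fun ω => 1 + c * X ω | G] =ᵐ[μ] fun _ => (1:ℝ) := by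
    have hfun : (fun ω => 1 + c * X ω) = (fun _ => (1:ℝ)) + c • X := by
      funext ω; simp [smul_eq_mul]
    rw [hfun]
    refine (condExp_add (integrable_const _) (hXint.smul _) G).trans ?_
    have hc0 := condExp_const (μ := μ) hG (1:ℝ)
    filter_upwards [condExp_smul (μ := μ) (m := G) c X, hXc] with ω ha hb
    simp only [Pi.add_apply, hc0, ha, Pi.smul_apply, hb, Pi.zero_apply, smul_eq_mul,
      mul_zero, add_zero]
  filter_upwards [h1, h2] with ω ha hb
  rw [← hb]; exact ha

end Cond

lemma azuma_max {Ω : Type*} {F : MeasurableSpace Ω} {μ : Measure Ω} [IsProbabilityMeasure μ]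
    (G : Filtration ℕ F) (n : ℕ) (hn : 1 ≤ n) (B : ℝ) (hB : 0 < B)
    (m : ℕ → Ω → ℝ)
    (hmeas : ∀ i < n, StronglyMeasurable[G (i + 1)] (m i))
    (hbdd : ∀ i < n, ∀ᵐ ω ∂μ, |m i ω| ≤ B)
    (hcond : ∀ i < n, μ[m i | G i] =ᵐ[μ] 0)
    (t : ℝ) (ht : 0 < t) :
    μ {ω | t ≤ (Finset.range (n+1)).sup' Finset.nonempty_range_add_one
        (fun k => ∑ i ∈ Finset.range k, m i ω)}
      ≤ ENNReal.ofReal (Real.exp (-t^2 / (2 * n * B^2))) := by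
  have hnR : (0:ℝ) < n := by exact_mod_cast hn
  set m' : ℕ → Ω → ℝ := fun i => if i < n then m i else fun _ => 0 with hm'
  set c : ℝ := t / (n * B^2) with hcdef
  have hc : 0 < c := div_pos ht (by positivity)
  have P1 : ∀ i, StronglyMeasurable[G (i+1)] (m' i) := by
    intro i
    by_cases hi : i < n
    · simpa [hm', hi] using hmeas i hi
    · simpa [hm', hi] using stronglyMeasurable_const
  have P1F : ∀ i, StronglyMeasurable[F] (m' i) := fun i => (P1 i).mono (G.le _)
  have P2 : ∀ i, ∀ᵐ ω ∂μ, |m' i ω| ≤ B := by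
    intro i
    by_cases hi : i < n
    · simpa [hm', hi] using hbdd i hi
    · refine Filter.Eventually.of_forall fun ω => ?_
      simp [hm', hi, hB.le]
  have P3 : ∀ i, μ[m' i | G i] =ᵐ[μ] 0 := by
    intro i
    by_cases hi : i < n
    · simpa [hm', hi] using hcond i hi
    · have : m' i = (0 : Ω → ℝ) := by funext ω; simp [hm', hi]
      rw [this, condExp_zero]
  set f : ℕ → Ω → ℝ := fun k ω => Real.exp (c * ∑ i ∈ Finset.range k, m' i ω) with hf
  have hfmeas : ∀ k, StronglyMeasurable[G k] (f k) := by
    intro k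
    have hsum : StronglyMeasurable[G k] (fun ω => ∑ i ∈ Finset.range k, m' i ω) := by
      apply Finset.stronglyMeasurable_fun_sum
      intro i hi
      exact (P1 i).mono (G.mono (Finset.mem_range.1 hi))
    exact Real.continuous_exp.comp_stronglyMeasurable (hsum.const_mul c)
  have hbd : ∀ᵐ ω ∂μ, ∀ i, |m' i ω| ≤ B := ae_all_iff.2 P2
  have hfle : ∀ k, ∀ᵐ ω ∂μ, f k ω ≤ Real.exp (c * (k * B)) := by
    intro k
    filter_upwards [hbd] with ω hω
    have h1 : ∑ i ∈ Finset.range k, m' i ω ≤ k * B := by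
      calc ∑ i ∈ Finset.range k, m' i ω ≤ ∑ i ∈ Finset.range k, B :=
            Finset.sum_le_sum fun i _ => (le_abs_self _).trans (hω i)
        _ = k * B := by rw [Finset.sum_const, Finset.card_range, nsmul_eq_mul]
    exact Real.exp_le_exp.2 (mul_le_mul_of_nonneg_left h1 hc.le)
  have hfint : ∀ k, Integrable (f k) μ := by
    intro k
    refine (integrable_const (Real.exp (c * (k * B)))).mono'
      ((hfmeas k).mono (G.le k)).aestronglyMeasurable ?_
    filter_upwards [hfle k] with ω h
    rw [Real.norm_eq_abs, abs_of_pos (Real.exp_pos _)]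
    exact h
  have hfsucc : ∀ k, f (k+1) = f k * (fun ω => Real.exp (c * m' k ω)) := by
    intro k
    funext ω
    simp only [hf, Pi.mul_apply, Finset.sum_range_succ, mul_add, Real.exp_add]
  have hgint : ∀ k, Integrable (fun ω => Real.exp (c * m' k ω)) μ :=
    fun k => exp_int_of_bdd (P1F k) hB (P2 k) c
  have hpull : ∀ k, μ[f (k+1) | G k] =ᵐ[μ]
      f k * μ[fun ω => Real.exp (c * m' k ω) | G k] := by
    intro k
    have h := condExp_mul_of_stronglyMeasurable_left (μ := μ) (m := (G k : MeasurableSpace Ω))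
      (hfmeas k) (by rw [← hfsucc k]; exact hfint (k+1)) (hgint k)
    rw [← hfsucc k] at h
    exact h
  have hsub : Submartingale f G μ := by
    refine submartingale_nat (fun k => hfmeas k) hfint fun k => ?_
    have hlow := condexp_exp_lower (G.le k) (P1F k) hB (P2 k) (P3 k) c
    filter_upwards [hpull k, hlow] with ω h1 h2
    rw [h1, Pi.mul_apply]
    exact le_mul_of_one_le_right (Real.exp_pos _).le h2
  have hEf : ∀ k, ∫ ω, f k ω ∂μ ≤ Real.exp (k * (c^2 * B^2 / 2)) := by
    intro k
    induction k with
    | zero => simp [hf]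
    | succ k ih =>
      have hup := condexp_exp_upper (G.le k) (P1F k) hB (P2 k) (P3 k) c
      have h1 : ∫ ω, f (k+1) ω ∂μ = ∫ ω, (μ[f (k+1) | G k]) ω ∂μ :=
        (integral_condExp (G.le k)).symm
      have h2 : μ[f (k+1) | G k] ≤ᵐ[μ] fun ω => f k ω * Real.exp (c^2 * B^2 / 2) := by
        filter_upwards [hpull k, hup] with ω ha hb
        rw [ha, Pi.mul_apply]
        exact mul_le_mul_of_nonneg_left hb (Real.exp_pos _).le
      calc ∫ ω, f (k+1) ω ∂μ = ∫ ω, (μ[f (k+1) | G k]) ω ∂μ := h1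
        _ ≤ ∫ ω, f k ω * Real.exp (c^2 * B^2 / 2) ∂μ :=
            integral_mono_ae integrable_condExp ((hfint k).mul_const _) h2
        _ = (∫ ω, f k ω ∂μ) * Real.exp (c^2 * B^2 / 2) := integral_mul_const _ _
        _ ≤ Real.exp (k * (c^2 * B^2 / 2)) * Real.exp (c^2 * B^2 / 2) :=
            mul_le_mul_of_nonneg_right ih (Real.exp_pos _).le
        _ = Real.exp ((k+1 : ℕ) * (c^2 * B^2 / 2)) := by
            rw [← Real.exp_add]; congr 1; push_cast; ring
  set ε : NNReal := (Real.exp (c * t)).toNNReal with hε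
  have hεcoe : (ε : ℝ) = Real.exp (c * t) := Real.coe_toNNReal _ (Real.exp_pos _).le
  have hSeq : ∀ k ∈ Finset.range (n+1), ∀ ω : Ω,
      ∑ i ∈ Finset.range k, m' i ω = ∑ i ∈ Finset.range k, m i ω := by
    intro k hk ω
    refine Finset.sum_congr rfl fun i hi => ?_
    have hik : i < n :=
      lt_of_lt_of_le (Finset.mem_range.1 hi) (Nat.lt_succ_iff.1 (Finset.mem_range.1 hk))
    simp [hm', hik]
  have hset : {ω | t ≤ (Finset.range (n+1)).sup' Finset.nonempty_range_add_one
        (fun k => ∑ i ∈ Finset.range k, m i ω)}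
      = {ω | (ε : ℝ) ≤ (Finset.range (n+1)).sup' Finset.nonempty_range_add_one
        (fun k => f k ω)} := by
    ext ω
    simp only [Set.mem_setOf_eq, Finset.le_sup'_iff, hεcoe]
    constructor
    · rintro ⟨k, hk, hkt⟩
      refine ⟨k, hk, ?_⟩
      rw [hf]
      dsimp only
      rw [hSeq k hk ω]
      exact Real.exp_le_exp.2 (mul_le_mul_of_nonneg_left hkt hc.le)
    · rintro ⟨k, hk, hkt⟩
      refine ⟨k, hk, ?_⟩
      rw [hf] at hkt
      dsimp only at hkt
      rw [hSeq k hk ω] at hkt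
      have := Real.exp_le_exp.1 hkt
      exact le_of_mul_le_mul_left this hc
  have hdoob := maximal_ineq hsub (fun k ω => (Real.exp_pos _).le) (ε := ε) n
  have h5 : ∫ ω in {ω | (ε : ℝ) ≤ (Finset.range (n+1)).sup' Finset.nonempty_range_add_one
        (fun k => f k ω)}, f n ω ∂μ ≤ ∫ ω, f n ω ∂μ :=
    setIntegral_le_integral (hfint n) (Filter.Eventually.of_forall fun ω => (Real.exp_pos _).le)
  have h6 : (ε : ENNReal) * μ {ω | (ε : ℝ) ≤ (Finset.range (n+1)).sup'
        Finset.nonempty_range_add_one (fun k => f k ω)}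
      ≤ ENNReal.ofReal (Real.exp (n * (c^2 * B^2 / 2))) := by
    refine le_trans hdoob ?_
    exact ENNReal.ofReal_le_ofReal (h5.trans (hEf n))
  rw [hset]
  have hεne : (ε : ENNReal) ≠ 0 := by
    simp [hε, ENNReal.coe_ne_zero, Real.toNNReal_eq_zero, not_le, Real.exp_pos]
  have hεtop : (ε : ENNReal) ≠ ⊤ := ENNReal.coe_ne_top
  have h7 : μ {ω | (ε : ℝ) ≤ (Finset.range (n+1)).sup' Finset.nonempty_range_add_one
        (fun k => f k ω)} ≤ ENNReal.ofReal (Real.exp (n * (c^2 * B^2 / 2))) / ε :=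
    (ENNReal.le_div_iff_mul_le (Or.inl hεne) (Or.inl hεtop)).2 (by rwa [mul_comm])
  refine h7.trans ?_
  have hεofReal : (ε : ENNReal) = ENNReal.ofReal (Real.exp (c * t)) := rfl
  rw [hεofReal, ← ENNReal.ofReal_div_of_pos (Real.exp_pos _), ← Real.exp_sub]
  apply ENNReal.ofReal_le_ofReal
  apply le_of_eq
  congr 1
  rw [hcdef]
  field_simp
  ring

end AzumaAux

/-- A union-bound maximal Azuma–Hoeffding inequality for a doubly-indexed array
of bounded martingale differences: for each fixed `s < τ` the sequence
`(m i s)_i` is a bounded martingale difference sequence with respect to the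
filtration `G`, and the maximum over `1 ≤ k ≤ n` of the absolute double sums
satisfies a Gaussian-type tail bound with an extra factor `2 τ`. -/
theorem union_maximal_azuma_hoeffding
    {Ω : Type*} {F : MeasurableSpace Ω} {μ : Measure Ω} [IsProbabilityMeasure μ]
    (G : Filtration ℕ F)
    (τ n : ℕ) (hτ : 1 ≤ τ) (hn : 1 ≤ n)
    (B : ℝ) (hB : 0 < B)
    (m : ℕ → ℕ → Ω → ℝ)
    (hmeas : ∀ i < n, ∀ s < τ, StronglyMeasurable[G (i + 1)] (m i s))
    (hbdd : ∀ i < n, ∀ s < τ, ∀ᵐ ω ∂μ, |m i s ω| ≤ B)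
    (hcond : ∀ i < n, ∀ s < τ, μ[m i s | G i] =ᵐ[μ] 0)
    (a : ℝ) (ha : 0 < a) :
    μ {ω | a ≤ (Finset.Icc 1 n).sup' (Finset.nonempty_Icc.mpr hn)
        (fun k => |∑ s ∈ Finset.range τ, ∑ i ∈ Finset.range k, m i s ω|)} ≤
      ENNReal.ofReal (2 * τ * Real.exp (-a ^ 2 / (2 * τ ^ 2 * n * B ^ 2))) := by
  have hτR : (0:ℝ) < τ := by exact_mod_cast hτ
  set t : ℝ := a / τ with htdef
  have ht : 0 < t := div_pos ha hτR
  set Sp : ℕ → Set Ω := fun s => {ω | t ≤ (Finset.range (n+1)).sup'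
      Finset.nonempty_range_add_one (fun k => ∑ i ∈ Finset.range k, m i s ω)} with hSp
  set Sm : ℕ → Set Ω := fun s => {ω | t ≤ (Finset.range (n+1)).sup'
      Finset.nonempty_range_add_one (fun k => ∑ i ∈ Finset.range k, (-(m i s)) ω)} with hSm
  have hsubset : {ω | a ≤ (Finset.Icc 1 n).sup' (Finset.nonempty_Icc.mpr hn)
      (fun k => |∑ s ∈ Finset.range τ, ∑ i ∈ Finset.range k, m i s ω|)}
      ⊆ ⋃ s ∈ Finset.range τ, (Sp s ∪ Sm s) := by
    intro ω hω
    rw [Set.mem_setOf_eq, Finset.le_sup'_iff] at hω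
    obtain ⟨k, hk, hka⟩ := hω
    have habs : a ≤ ∑ s ∈ Finset.range τ, |∑ i ∈ Finset.range k, m i s ω| :=
      hka.trans (Finset.abs_sum_le_sum_abs _ _)
    have hτ0 : (τ:ℝ) ≠ 0 := ne_of_gt hτR
    have hconst : ∑ _s ∈ Finset.range τ, t = a := by
      rw [Finset.sum_const, Finset.card_range, nsmul_eq_mul, htdef]
      field_simp
    have hsum2 : ∑ _s ∈ Finset.range τ, t
        ≤ ∑ s ∈ Finset.range τ, |∑ i ∈ Finset.range k, m i s ω| := by
      rw [hconst]; exact habs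
    obtain ⟨s, hs, hst⟩ := Finset.exists_le_of_sum_le ⟨0, Finset.mem_range.2 hτ⟩ hsum2
    have hkmem : k ∈ Finset.range (n+1) :=
      Finset.mem_range.2 (Nat.lt_succ_of_le (Finset.mem_Icc.1 hk).2)
    refine Set.mem_biUnion hs ?_
    rcases le_abs.1 hst with h | h
    · left
      show t ≤ _
      exact le_trans h (Finset.le_sup' (fun k => ∑ i ∈ Finset.range k, m i s ω) hkmem)
    · right
      show t ≤ _
      refine le_trans ?_ (Finset.le_sup' (fun k => ∑ i ∈ Finset.range k, (-(m i s)) ω) hkmem)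
      simpa using h
  have hbound : ∀ s < τ, μ (Sp s ∪ Sm s) ≤
      ENNReal.ofReal (2 * Real.exp (-t^2 / (2 * n * B^2))) := by
    intro s hs
    have h1 : μ (Sp s) ≤ ENNReal.ofReal (Real.exp (-t^2 / (2 * n * B^2))) :=
      azuma_max G n hn B hB (fun i => m i s) (fun i hi => hmeas i hi s hs)
        (fun i hi => hbdd i hi s hs) (fun i hi => hcond i hi s hs) t ht
    have h2 : μ (Sm s) ≤ ENNReal.ofReal (Real.exp (-t^2 / (2 * n * B^2))) := by
      refine azuma_max G n hn B hB (fun i => -(m i s)) (fun i hi => (hmeas i hi s hs).neg)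
        (fun i hi => ?_) (fun i hi => ?_) t ht
      · filter_upwards [hbdd i hi s hs] with ω h
        simpa using h
      · refine (condExp_neg _ _).trans ?_
        filter_upwards [hcond i hi s hs] with ω h
        simp [h]
    calc μ (Sp s ∪ Sm s) ≤ μ (Sp s) + μ (Sm s) := measure_union_le _ _
      _ ≤ ENNReal.ofReal (Real.exp (-t^2 / (2 * n * B^2)))
          + ENNReal.ofReal (Real.exp (-t^2 / (2 * n * B^2))) := add_le_add h1 h2
      _ = ENNReal.ofReal (2 * Real.exp (-t^2 / (2 * n * B^2))) := by
          rw [← ENNReal.ofReal_add (Real.exp_pos _).le (Real.exp_pos _).le]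
          congr 1; ring
  refine le_trans (measure_mono hsubset) ?_
  calc μ (⋃ s ∈ Finset.range τ, (Sp s ∪ Sm s))
      ≤ ∑ s ∈ Finset.range τ, μ (Sp s ∪ Sm s) := measure_biUnion_finset_le _ _
    _ ≤ ∑ _s ∈ Finset.range τ, ENNReal.ofReal (2 * Real.exp (-t^2 / (2 * n * B^2))) :=
        Finset.sum_le_sum fun s hs => hbound s (Finset.mem_range.1 hs)
    _ = (τ : ENNReal) * ENNReal.ofReal (2 * Real.exp (-t^2 / (2 * n * B^2))) := by
        rw [Finset.sum_const, Finset.card_range, nsmul_eq_mul]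
    _ = ENNReal.ofReal (2 * τ * Real.exp (-a ^ 2 / (2 * τ ^ 2 * n * B ^ 2))) := by
        rw [← ENNReal.ofReal_natCast τ, ← ENNReal.ofReal_mul (Nat.cast_nonneg τ)]
        congr 1
        have hexp : -t^2 / (2 * n * B^2) = -a ^ 2 / (2 * τ ^ 2 * n * B ^ 2) := by
          rw [htdef]
          field_simp
        rw [hexp]
        ring
end

section
/- Let R ≥ 1 be a natural number, ε > 0, and λ, s : Fin R → [0, ∞) with λ_r + ε ≤ s_r for every r. Let Q : [0, ∞) → Fin R → [0, ∞) with each coordinate Q_r Lipschitz continuous, and let D_r : [0, ∞) → [0, ∞) be nondecreasing Lipschitz continuous functions with D_r(0) = 0, such that Q_r(t) = Q_r(0) + λ_r · t − D_r(t) for all t ≥ 0 and all r. Assume that for all 0 ≤ u ≤ t, ∑_r ∫_{(u,t]} Q_r(v) dD_r(v) ≥ ∫_u^t ∑_r Q_r(v) · s_r dv, where the left-hand integrals are Lebesgue–Stieltjes integrals with respect to D_r. Then Q_r(t) = 0 for every r and every t ≥ T, where T = (2√R / ε) · √( (1/2) ∑_r Q_r(0)² ). -/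
open MeasureTheory Finset

lemma partition_bound (φ : ℝ → ℝ) (u t c : ℝ) (hc : 0 ≤ c) (hut : u ≤ t)
    (H : ∀ a b, u ≤ a → a ≤ b → b ≤ t → φ b ≤ φ a + c * (b - a) ^ 2) :
    φ t ≤ φ u := by
  have main : ∀ n : ℕ, φ t ≤ φ u + c * (t - u) ^ 2 / (n + 1) := by
    intro n
    have hn1 : (0:ℝ) < n + 1 := by positivity
    set h : ℝ := (t - u) / (n + 1) with hh
    have hh0 : 0 ≤ h := div_nonneg (by linarith) hn1.le
    set v : ℕ → ℝ := fun i => u + i * h with hv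
    have hvlb : ∀ i : ℕ, u ≤ v i := by
      intro i
      have : 0 ≤ (i : ℝ) * h := mul_nonneg (Nat.cast_nonneg i) hh0
      simp only [hv]; linarith
    have hvmono : ∀ i : ℕ, v i ≤ v (i + 1) := by
      intro i
      simp only [hv]; push_cast; nlinarith
    have hvub : ∀ i : ℕ, i ≤ n + 1 → v i ≤ t := by
      intro i hi
      have hi' : (i : ℝ) ≤ (n : ℝ) + 1 := by exact_mod_cast hi
      have : (i : ℝ) * h ≤ ((n:ℝ) + 1) * h := mul_le_mul_of_nonneg_right hi' hh0
      have he : ((n:ℝ) + 1) * h = t - u := by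
        rw [hh]; field_simp
      simp only [hv]; linarith
    have hvend : v (n + 1) = t := by
      have he : ((n:ℝ) + 1) * h = t - u := by rw [hh]; field_simp
      simp only [hv]; push_cast; linarith
    have tel : φ (v (n+1)) - φ (v 0) = ∑ i ∈ Finset.range (n+1), (φ (v (i+1)) - φ (v i)) :=
      (Finset.sum_range_sub (fun i => φ (v i)) (n+1)).symm
    have bound : ∀ i ∈ Finset.range (n+1), φ (v (i+1)) - φ (v i) ≤ c * h ^ 2 := by
      intro i hi
      have hi' : i + 1 ≤ n + 1 := Finset.mem_range.mp hi
      have hd : v (i+1) - v i = h := by simp only [hv]; push_cast; ring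
      have := H (v i) (v (i+1)) (hvlb i) (hvmono i) (hvub (i+1) hi')
      rw [hd] at this
      linarith
    have hsum : φ (v (n+1)) - φ (v 0) ≤ (n+1) * (c * h ^ 2) := by
      rw [tel]
      calc ∑ i ∈ Finset.range (n+1), (φ (v (i+1)) - φ (v i))
          ≤ ∑ _i ∈ Finset.range (n+1), c * h ^ 2 := Finset.sum_le_sum bound
        _ = (n+1) * (c * h ^ 2) := by simp [Finset.sum_const, mul_comm]
    have hv0 : v 0 = u := by simp [hv]
    have hcalc : ((n:ℝ)+1) * (c * h ^ 2) = c * (t - u) ^ 2 / (n + 1) := by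
      rw [hh]; field_simp
    rw [hvend, hv0] at hsum
    linarith [hcalc ▸ hsum]
  refine le_of_forall_pos_le_add ?_
  intro η hη
  obtain ⟨n, hn⟩ := exists_nat_ge (c * (t - u) ^ 2 / η)
  have hn1 : (0:ℝ) < n + 1 := by positivity
  have : c * (t - u) ^ 2 / (n + 1) ≤ η := by
    rw [div_le_iff₀ hn1]
    have h1 : c * (t-u)^2 ≤ n * η := by
      rw [div_le_iff₀ hη] at hn; linarith
    nlinarith
  linarith [main n]


set_option maxHeartbeats 1000000 in
/-- Fluid stability theorem for the quantum switch, in abstract form: if the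
fluid request queues `Q` satisfy the fluid balance equations with arrival rates
`lam`, nondecreasing Lipschitz cumulative departure processes `D` (viewed as
Stieltjes functions), and the weighted Stieltjes departure integral dominates
the integral of `∑_r Q_r · s_r` where `lam r + ε ≤ s r` for all `r`, then every
queue drains to zero by time `T = (2√R/ε)·√((1/2)∑_r Q_r(0)²)` and stays
at zero. -/
theorem fluid_stability
    (R : ℕ) (hR : 1 ≤ R) (ε : ℝ) (hε : 0 < ε)
    (lam s : Fin R → ℝ)
    (hlam0 : ∀ r, 0 ≤ lam r) (hs0 : ∀ r, 0 ≤ s r)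
    (hrate : ∀ r, lam r + ε ≤ s r)
    (Q : ℝ → Fin R → ℝ)
    (hQnonneg : ∀ r, ∀ t, 0 ≤ t → 0 ≤ Q t r)
    (hQlip : ∀ r, ∃ K : NNReal, LipschitzOnWith K (fun t => Q t r) (Set.Ici 0))
    (D : Fin R → StieltjesFunction ℝ)
    (hDlip : ∀ r, ∃ K : NNReal, LipschitzWith K (D r))
    (hD0 : ∀ r, D r 0 = 0)
    (hbalance : ∀ r, ∀ t, 0 ≤ t → Q t r = Q 0 r + lam r * t - D r t)
    (hopt : ∀ u t, 0 ≤ u → u ≤ t →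
      (∫ v in u..t, ∑ r, Q v r * s r) ≤
        ∑ r, ∫ v in Set.Ioc u t, Q v r ∂((D r).measure)) :
    ∀ r, ∀ t,
      (2 * Real.sqrt R / ε) * Real.sqrt ((1 / 2) * ∑ r, (Q 0 r) ^ 2) ≤ t →
      Q t r = 0 := by
  intro r₀ t₀ ht₀
  choose K hK using hDlip
  choose L hL using hQlip
  set F : ℝ → ℝ := fun v => ∑ r, Q v r ^ 2 with hF
  set g : ℝ → ℝ := fun v => Real.sqrt (F v) with hg
  set C : ℝ := ∑ r, (2 * lam r * (L r : ℝ) + 2 * (L r : ℝ) * (K r : ℝ)) with hC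
  have hC0 : 0 ≤ C := Finset.sum_nonneg (fun r _ => by have := hlam0 r; positivity)
  have hF0 : ∀ v, 0 ≤ F v := fun v => Finset.sum_nonneg (fun r _ => sq_nonneg _)
  -- continuity / integrability
  have hQcont : ∀ r, ContinuousOn (fun v => Q v r) (Set.Ici 0) := fun r => (hL r).continuousOn
  have hsub : ∀ a b : ℝ, 0 ≤ a → a ≤ b → Set.uIcc a b ⊆ Set.Ici 0 := by
    intro a b ha hab
    rw [Set.uIcc_of_le hab]
    exact fun x hx => le_trans ha hx.1
  have hQInt : ∀ r (a b : ℝ), 0 ≤ a → a ≤ b → IntervalIntegrable (fun v => Q v r) volume a b :=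
    fun r a b ha hab => ((hQcont r).mono (hsub a b ha hab)).intervalIntegrable
  -- Lipschitz bound for Q
  have hQlipb : ∀ r (x y : ℝ), 0 ≤ x → 0 ≤ y → |Q x r - Q y r| ≤ (L r : ℝ) * |x - y| := by
    intro r x y hx hy
    have := (hL r).dist_le_mul x hx y hy
    simpa [Real.dist_eq] using this
  -- the key per-interval estimate
  have key : ∀ a b, 0 ≤ a → a ≤ b →
      F b ≤ F a - 2 * ε * (∫ v in a..b, ∑ r, Q v r) + C * (b - a) ^ 2 := by
    intro a b ha hab
    have hb : (0:ℝ) ≤ b := ha.trans hab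
    have hQv0 : ∀ v ∈ Set.Icc a b, (0:ℝ) ≤ v := fun v hv => ha.trans hv.1
    -- per-r estimate
    have est : ∀ r : Fin R, Q b r ^ 2 - Q a r ^ 2 ≤
        2 * lam r * (∫ v in a..b, Q v r)
        - 2 * (∫ v in Set.Ioc a b, Q v r ∂((D r).measure))
        + (2 * lam r * (L r : ℝ) + 2 * (L r : ℝ) * (K r : ℝ)) * (b - a) ^ 2 := by
      intro r
      have hdiff : Q b r - Q a r = lam r * (b - a) - ((D r) b - (D r) a) := by
        have h1 := hbalance r b hb
        have h2 := hbalance r a ha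
        rw [h1, h2]; ring
      have hid : Q b r ^ 2 - Q a r ^ 2 =
          (Q b r + Q a r) * (lam r * (b - a)) - (Q b r + Q a r) * ((D r) b - (D r) a) := by
        have : Q b r ^ 2 - Q a r ^ 2 = (Q b r + Q a r) * (Q b r - Q a r) := by ring
        rw [this, hdiff]; ring
      have hDmono : 0 ≤ (D r) b - (D r) a := by
        have := (D r).mono hab; linarith
      have hDK : (D r) b - (D r) a ≤ (K r : ℝ) * (b - a) := by
        have := (hK r).dist_le_mul b a
        rw [Real.dist_eq, Real.dist_eq] at this
        have h2 := le_abs_self ((D r) b - (D r) a)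
        rw [abs_of_nonneg (by linarith : (0:ℝ) ≤ b - a)] at this
        linarith
      -- pointwise bounds
      have hup : ∀ v ∈ Set.Icc a b, Q b r + Q a r ≤ 2 * Q v r + 2 * (L r : ℝ) * (b - a) := by
        intro v hv
        have h1 := hQlipb r b v hb (hQv0 v hv)
        have h2 := hQlipb r a v ha (hQv0 v hv)
        have e1 : |b - v| ≤ b - a := by rw [abs_of_nonneg (by linarith [hv.2])]; linarith [hv.1]
        have e2 : |a - v| ≤ b - a := by rw [abs_of_nonpos (by linarith [hv.1])]; linarith [hv.2]
        have l1 := (abs_le.mp h1).2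
        have l2 := (abs_le.mp h2).2
        have hL0 : (0:ℝ) ≤ L r := (L r).coe_nonneg
        nlinarith [(abs_le.mp h1).2, (abs_le.mp h2).2, mul_le_mul_of_nonneg_left e1 hL0,
          mul_le_mul_of_nonneg_left e2 hL0]
      have hdown : ∀ v ∈ Set.Icc a b, 2 * Q v r - 2 * (L r : ℝ) * (b - a) ≤ Q b r + Q a r := by
        intro v hv
        have h1 := hQlipb r b v hb (hQv0 v hv)
        have h2 := hQlipb r a v ha (hQv0 v hv)
        have e1 : |b - v| ≤ b - a := by rw [abs_of_nonneg (by linarith [hv.2])]; linarith [hv.1]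
        have e2 : |a - v| ≤ b - a := by rw [abs_of_nonpos (by linarith [hv.1])]; linarith [hv.2]
        have hL0 : (0:ℝ) ≤ L r := (L r).coe_nonneg
        nlinarith [(abs_le.mp h1).1, (abs_le.mp h2).1, mul_le_mul_of_nonneg_left e1 hL0,
          mul_le_mul_of_nonneg_left e2 hL0]
      -- term 1 : arrival part
      have term1 : (Q b r + Q a r) * (lam r * (b - a)) ≤
          2 * lam r * (∫ v in a..b, Q v r) + 2 * lam r * (L r : ℝ) * (b - a) ^ 2 := by
        have hint1 : IntervalIntegrable (fun _ : ℝ => Q b r + Q a r) volume a b :=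
          intervalIntegrable_const
        have hint2 : IntervalIntegrable (fun v => 2 * Q v r + 2 * (L r : ℝ) * (b - a)) volume a b :=
          ((hQInt r a b ha hab).const_mul 2).add intervalIntegrable_const
        have hmono := intervalIntegral.integral_mono_on hab hint1 hint2 hup
        rw [intervalIntegral.integral_const] at hmono
        rw [intervalIntegral.integral_add ((hQInt r a b ha hab).const_mul 2)
          intervalIntegrable_const, intervalIntegral.integral_const_mul,
          intervalIntegral.integral_const] at hmono
        simp only [smul_eq_mul] at hmono
        have hlam := hlam0 r
        nlinarith [mul_le_mul_of_nonneg_left hmono hlam]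
      -- term 2 : departure part
      have term2 : 2 * (∫ v in Set.Ioc a b, Q v r ∂((D r).measure))
          - 2 * (L r : ℝ) * (K r : ℝ) * (b - a) ^ 2 ≤
          (Q b r + Q a r) * ((D r) b - (D r) a) := by
        set μ := (D r).measure with hμ
        have hμIoc : μ (Set.Ioc a b) = ENNReal.ofReal ((D r) b - (D r) a) :=
          StieltjesFunction.measure_Ioc _ _ _
        have hμfin : μ (Set.Ioc a b) < ⊤ := by rw [hμIoc]; exact ENNReal.ofReal_lt_top
        have hμreal : (μ (Set.Ioc a b)).toReal = (D r) b - (D r) a := by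
          rw [hμIoc, ENNReal.toReal_ofReal hDmono]
        have hQμ : IntegrableOn (fun v => Q v r) (Set.Ioc a b) μ := by
          have : IntegrableOn (fun v => Q v r) (Set.Icc a b) μ :=
            ContinuousOn.integrableOn_compact isCompact_Icc
              ((hQcont r).mono (fun x hx => ha.trans hx.1))
          exact this.mono_set Set.Ioc_subset_Icc_self
        have hconst : ∀ c : ℝ, IntegrableOn (fun _ => c) (Set.Ioc a b) μ :=
          fun c => integrableOn_const hμfin.ne
        have hmono : (∫ v in Set.Ioc a b, (2 * Q v r - 2 * (L r : ℝ) * (b - a)) ∂μ) ≤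
            ∫ _v in Set.Ioc a b, (Q b r + Q a r) ∂μ := by
          apply setIntegral_mono_on ((hQμ.const_mul 2).sub (hconst _)) (hconst _)
            measurableSet_Ioc
          intro v hv
          exact hdown v (Set.Ioc_subset_Icc_self hv)
        rw [setIntegral_const, smul_eq_mul, measureReal_def, hμreal] at hmono
        rw [integral_sub (hQμ.const_mul 2) (hconst _), integral_const_mul,
          setIntegral_const, smul_eq_mul, measureReal_def, hμreal] at hmono
        have hL0 : (0:ℝ) ≤ L r := (L r).coe_nonneg
        nlinarith [mul_le_mul_of_nonneg_left hDK (mul_nonneg (by norm_num : (0:ℝ) ≤ 2) hL0)]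
      linarith [hid, term1, term2]
    -- sum over r
    have sum_est : F b - F a ≤ (∑ r, 2 * lam r * (∫ v in a..b, Q v r))
        - 2 * (∑ r, ∫ v in Set.Ioc a b, Q v r ∂((D r).measure)) + C * (b - a) ^ 2 := by
      have h1 : F b - F a = ∑ r, (Q b r ^ 2 - Q a r ^ 2) := by
        rw [hF]; rw [Finset.sum_sub_distrib]
      rw [h1]
      calc ∑ r, (Q b r ^ 2 - Q a r ^ 2)
          ≤ ∑ r, (2 * lam r * (∫ v in a..b, Q v r)
            - 2 * (∫ v in Set.Ioc a b, Q v r ∂((D r).measure))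
            + (2 * lam r * (L r : ℝ) + 2 * (L r : ℝ) * (K r : ℝ)) * (b - a) ^ 2) :=
            Finset.sum_le_sum (fun r _ => est r)
        _ = (∑ r, 2 * lam r * (∫ v in a..b, Q v r))
            - 2 * (∑ r, ∫ v in Set.Ioc a b, Q v r ∂((D r).measure)) + C * (b - a) ^ 2 := by
            rw [Finset.sum_add_distrib, Finset.sum_sub_distrib, ← Finset.sum_mul,
              Finset.mul_sum, hC]
    -- apply optimality
    have hoptab := hopt a b ha hab
    -- rewrite sum of integrals
    have hsumlam : (∑ r, 2 * lam r * (∫ v in a..b, Q v r)) =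
        ∫ v in a..b, ∑ r, 2 * lam r * Q v r := by
      rw [intervalIntegral.integral_finset_sum
        (fun r _ => (hQInt r a b ha hab).const_mul (2 * lam r))]
      exact Finset.sum_congr rfl (fun r _ => (intervalIntegral.integral_const_mul _ _).symm)
    have hintsum : IntervalIntegrable (fun v => ∑ r, Q v r) volume a b := by
      have := IntervalIntegrable.sum Finset.univ
        (f := fun (r : Fin R) (v : ℝ) => Q v r) (fun r _ => hQInt r a b ha hab)
      simpa [Finset.sum_fn] using this
    have hintlam : IntervalIntegrable (fun v => ∑ r, 2 * lam r * Q v r) volume a b := by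
      have := IntervalIntegrable.sum Finset.univ
        (f := fun (r : Fin R) (v : ℝ) => 2 * lam r * Q v r)
        (fun r _ => (hQInt r a b ha hab).const_mul _)
      simpa [Finset.sum_fn] using this
    have hints : IntervalIntegrable (fun v => ∑ r, Q v r * s r) volume a b := by
      have := IntervalIntegrable.sum Finset.univ
        (f := fun (r : Fin R) (v : ℝ) => Q v r * s r)
        (fun r _ => (hQInt r a b ha hab).mul_const _)
      simpa [Finset.sum_fn] using this
    have hcomb : (∫ v in a..b, ∑ r, 2 * lam r * Q v r)
        - 2 * (∫ v in a..b, ∑ r, Q v r * s r) ≤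
        -(2 * ε) * ∫ v in a..b, ∑ r, Q v r := by
      rw [← intervalIntegral.integral_const_mul (2:ℝ),
        ← intervalIntegral.integral_sub hintlam (hints.const_mul 2),
        ← intervalIntegral.integral_const_mul]
      apply intervalIntegral.integral_mono_on hab (hintlam.sub (hints.const_mul 2))
        (hintsum.const_mul _)
      intro v hv
      have hQ0v : ∀ r : Fin R, 0 ≤ Q v r := fun r => hQnonneg r v (hQv0 v hv)
      have : ∀ r : Fin R, 2 * lam r * Q v r - 2 * (Q v r * s r) ≤ -(2 * ε) * Q v r := by
        intro r
        have := hrate r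
        nlinarith [hQ0v r]
      calc (∑ r, 2 * lam r * Q v r) - 2 * ∑ r, Q v r * s r
          = ∑ r, (2 * lam r * Q v r - 2 * (Q v r * s r)) := by
            rw [Finset.sum_sub_distrib, Finset.mul_sum]
        _ ≤ ∑ r, -(2 * ε) * Q v r := Finset.sum_le_sum (fun r _ => this r)
        _ = -(2 * ε) * ∑ r, Q v r := by rw [Finset.mul_sum]
    have : F b - F a ≤ -(2 * ε) * (∫ v in a..b, ∑ r, Q v r) + C * (b - a) ^ 2 := by
      rw [hsumlam] at sum_est
      nlinarith [hoptab, sum_est, hcomb]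
    linarith
  -- monotonicity of F
  have monoF : ∀ u v : ℝ, 0 ≤ u → u ≤ v → F v ≤ F u := by
    intro u v hu huv
    refine partition_bound F u v C hC0 huv ?_
    intro a b hau hab hbv
    have hkey := key a b (hu.trans hau) hab
    have hint : 0 ≤ ∫ x in a..b, ∑ r, Q x r :=
      intervalIntegral.integral_nonneg hab
        (fun x hx => Finset.sum_nonneg (fun r _ => hQnonneg r x ((hu.trans hau).trans hx.1)))
    have h2 : 0 ≤ 2 * ε * ∫ x in a..b, ∑ r, Q x r :=
      mul_nonneg (by linarith) hint
    linarith
  have ht₀0 : 0 ≤ t₀ :=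
    le_trans (mul_nonneg (div_nonneg (by positivity) hε.le) (Real.sqrt_nonneg _)) ht₀
  have hFt0 : F t₀ = 0 := by
    by_contra hne
    have hFpos : 0 < F t₀ := lt_of_le_of_ne (hF0 t₀) (Ne.symm hne)
    have hδpos : 0 < g t₀ := Real.sqrt_pos.mpr hFpos
    set δ := g t₀ with hδ
    set c : ℝ := (C + ε ^ 2) / (2 * δ) with hc
    have hc0 : 0 ≤ c := div_nonneg (by positivity) (by linarith)
    have hcδ : 2 * δ * c = C + ε ^ 2 := by
      rw [hc]; field_simp
    have hgge : ∀ v : ℝ, 0 ≤ v → v ≤ t₀ → δ ≤ g v := by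
      intro v hv hvt
      exact Real.sqrt_le_sqrt (monoF v t₀ hv hvt)
    have hψ : ∀ a b : ℝ, 0 ≤ a → a ≤ b → b ≤ t₀ →
        g b + ε * b ≤ (g a + ε * a) + c * (b - a) ^ 2 := by
      intro a b ha hab hbt
      have hb0 : (0:ℝ) ≤ b := ha.trans hab
      have hga : δ ≤ g a := hgge a ha (hab.trans hbt)
      have hgb : δ ≤ g b := hgge b hb0 hbt
      have hga2 : g a ^ 2 = F a := Real.sq_sqrt (hF0 a)
      have hgb2 : g b ^ 2 = F b := Real.sq_sqrt (hF0 b)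
      have hlow : (b - a) * g b ≤ ∫ v in a..b, ∑ r, Q v r := by
        have h1 : (∫ _v in a..b, g b) = (b - a) * g b := by
          rw [intervalIntegral.integral_const, smul_eq_mul]
        rw [← h1]
        have hintsum : IntervalIntegrable (fun v => ∑ r, Q v r) volume a b := by
          have := IntervalIntegrable.sum Finset.univ
            (f := fun (r : Fin R) (v : ℝ) => Q v r) (fun r _ => hQInt r a b ha hab)
          simpa [Finset.sum_fn] using this
        apply intervalIntegral.integral_mono_on hab intervalIntegrable_const hintsum
        intro v hv
        have hv0 : (0:ℝ) ≤ v := ha.trans hv.1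
        have h3 : g b ≤ g v := Real.sqrt_le_sqrt (monoF v b hv0 hv.2)
        have h5 : F v ≤ (∑ r, Q v r) ^ 2 :=
          Finset.sum_sq_le_sq_sum_of_nonneg (fun r _ => hQnonneg r v hv0)
        have h4 : g v ≤ ∑ r, Q v r := by
          calc g v ≤ Real.sqrt ((∑ r, Q v r) ^ 2) := Real.sqrt_le_sqrt h5
            _ = ∑ r, Q v r := Real.sqrt_sq (Finset.sum_nonneg fun r _ => hQnonneg r v hv0)
        linarith
      have hkey := key a b ha hab
      have h1 : F b + 2 * ε * ((b - a) * g b) ≤ F a + C * (b - a) ^ 2 := by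
        have h6 : 2 * ε * ((b - a) * g b) ≤ 2 * ε * ∫ v in a..b, ∑ r, Q v r :=
          mul_le_mul_of_nonneg_left hlow (by linarith)
        linarith
      set w : ℝ := c * (b - a) ^ 2 with hw
      have hw0 : 0 ≤ w := mul_nonneg hc0 (sq_nonneg _)
      have h2 : (C + ε ^ 2) * (b - a) ^ 2 ≤ 2 * g a * w := by
        have h7 : δ * (c * (b - a) ^ 2) ≤ g a * (c * (b - a) ^ 2) :=
          mul_le_mul_of_nonneg_right hga (mul_nonneg hc0 (sq_nonneg _))
        nlinarith [hcδ]
      have hsq : (g b + ε * (b - a)) ^ 2 ≤ (g a + w) ^ 2 := by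
        nlinarith [h1, h2, sq_nonneg w]
      have hx0 : 0 ≤ g b + ε * (b - a) := by
        have := Real.sqrt_nonneg (F b)
        have : 0 ≤ ε * (b - a) := mul_nonneg hε.le (by linarith)
        have hgb0 : 0 ≤ g b := Real.sqrt_nonneg (F b)
        linarith
      have hy0 : 0 ≤ g a + w := by
        have hga0 : 0 ≤ g a := Real.sqrt_nonneg (F a)
        linarith
      have hfin : g b + ε * (b - a) ≤ g a + w := by
        have h8 := Real.sqrt_le_sqrt hsq
        rwa [Real.sqrt_sq hx0, Real.sqrt_sq hy0] at h8
      linarith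
    have hdec : g t₀ + ε * t₀ ≤ g 0 + ε * 0 :=
      partition_bound (fun v => g v + ε * v) 0 t₀ c hc0 ht₀0
        (fun a b ha hab hbt => hψ a b ha hab hbt)
    -- now derive a contradiction
    have hR1 : (1:ℝ) ≤ Real.sqrt R := Real.one_le_sqrt.mpr (by exact_mod_cast hR)
    have hhalf : (1/2 : ℝ) * ∑ r, Q 0 r ^ 2 = F 0 / 2 := by rw [hF]; ring
    have hs1 : Real.sqrt (F 0) ≤ 2 * Real.sqrt (F 0 / 2) := by
      have h9 : (2:ℝ) * Real.sqrt (F 0 / 2) = Real.sqrt (2 ^ 2 * (F 0 / 2)) := by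
        rw [Real.sqrt_mul (by norm_num : (0:ℝ) ≤ (2:ℝ)^2), Real.sqrt_sq (by norm_num : (0:ℝ) ≤ 2)]
      rw [h9]
      exact Real.sqrt_le_sqrt (by linarith [hF0 0])
    have hεt : Real.sqrt (F 0) ≤ ε * t₀ := by
      have h3 := mul_le_mul_of_nonneg_left ht₀ hε.le
      rw [hhalf] at h3
      have h2' : ε * (2 * Real.sqrt R / ε * Real.sqrt (F 0 / 2)) =
          2 * Real.sqrt R * Real.sqrt (F 0 / 2) := by
        field_simp
      rw [h2'] at h3
      have h4 : 2 * Real.sqrt (F 0 / 2) ≤ 2 * Real.sqrt R * Real.sqrt (F 0 / 2) := by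
        nlinarith [Real.sqrt_nonneg (F 0 / 2)]
      linarith
    have hg0 : g 0 = Real.sqrt (F 0) := rfl
    have : δ ≤ 0 := by
      rw [hg0] at hdec
      linarith
    linarith
  have hsq0 : Q t₀ r₀ ^ 2 = 0 :=
    (Finset.sum_eq_zero_iff_of_nonneg (fun r _ => sq_nonneg (Q t₀ r))).mp hFt0 r₀
      (Finset.mem_univ r₀)
  exact (pow_eq_zero_iff two_ne_zero).mp hsq0
end

section
/- Let Z, Q, A be finite nonempty types. Let p : Z → Q → A → ℝ with p z q a ≥ 0 and ∑_{a∈A} p z q a = 1 for all z, q (action probabilities); let T : Z → A → Z → ℝ with T z a z' ≥ 0 and ∑_{z'} T z a z' = 1 for all z, a (transitions of the first coordinate, which do not depend on the second coordinate given the action); and let S : Z → Q → A → Z → Q → ℝ with S z q a z' q' ≥ 0 and ∑_{q'} S z q a z' q' = 1 for all z, q, a, z' (transitions of the second coordinate). Define the joint kernel K (z,q) (z',q') = ∑_{a∈A} p z q a · T z a z' · S z q a z' q'. Suppose π : Z → Q → ℝ is a stationary probability distribution for K, i.e., π z' q' ≥ 0, ∑_{z,q} π z q = 1, and π z' q' =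 ∑_{z,q} π z q · K (z,q) (z',q') for all z', q'. Define the marginal μ z = ∑_{q} π z q and the averaged action weights w z a = ∑_{q} π z q · p z q a. Then for every z' ∈ Z: μ z' = ∑_{z∈Z} ∑_{a∈A} w z a · T z a z'. -/
open Finset

/-- Marginal balance: if `π` is a stationary distribution of the joint kernel
`K (z,q) (z',q') = ∑_a p z q a · T z a z' · S z q a z' q'`, where the
transition `T` of the first coordinate does not depend on the second
coordinate given the action, then the `Z`-marginal `μ z = ∑_q π z q` satisfies
the balance equation of the request-agnostic kernel with averaged action
weights `w z a = ∑_q π z q · p z q a`: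
  `μ z' = ∑_z ∑_a w z a · T z a z'`. -/
theorem marginal_balance
    {Z Q A : Type*} [Fintype Z] [Fintype Q] [Fintype A]
    [Nonempty Z] [Nonempty Q] [Nonempty A]
    (p : Z → Q → A → ℝ)
    (hp0 : ∀ z q a, 0 ≤ p z q a) (hp1 : ∀ z q, ∑ a, p z q a = 1)
    (T : Z → A → Z → ℝ)
    (hT0 : ∀ z a z', 0 ≤ T z a z') (hT1 : ∀ z a, ∑ z', T z a z' = 1)
    (S : Z → Q → A → Z → Q → ℝ)
    (hS0 : ∀ z q a z' q', 0 ≤ S z q a z' q')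
    (hS1 : ∀ z q a z', ∑ q', S z q a z' q' = 1)
    (π : Z → Q → ℝ)
    (hπ0 : ∀ z q, 0 ≤ π z q) (hπ1 : ∑ z, ∑ q, π z q = 1)
    (hstat : ∀ z' q', π z' q' =
      ∑ z, ∑ q, π z q * (∑ a, p z q a * T z a z' * S z q a z' q')) :
    ∀ z' : Z, (∑ q, π z' q) = ∑ z, ∑ a, (∑ q, π z q * p z q a) * T z a z' := by
  intro z'
  calc ∑ q', π z' q'
      = ∑ q', ∑ z, ∑ q, π z q * (∑ a, p z q a * T z a z' * S z q a z' q') := by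
        exact Finset.sum_congr rfl fun q' _ => hstat z' q'
    _ = ∑ z, ∑ q, ∑ a, π z q * (p z q a * T z a z') * (∑ q', S z q a z' q') := by
        rw [Finset.sum_comm]
        refine Finset.sum_congr rfl fun z _ => ?_
        rw [Finset.sum_comm]
        refine Finset.sum_congr rfl fun q _ => ?_
        simp_rw [Finset.mul_sum]
        rw [Finset.sum_comm]
        refine Finset.sum_congr rfl fun a _ => ?_
        refine Finset.sum_congr rfl fun q' _ => ?_
        ring
    _ = ∑ z, ∑ a, (∑ q, π z q * p z q a) * T z a z' := by
        refine Finset.sum_congr rfl fun z _ => ?_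
        rw [Finset.sum_comm]
        refine Finset.sum_congr rfl fun a _ => ?_
        rw [Finset.sum_mul]
        refine Finset.sum_congr rfl fun q _ => ?_
        rw [hS1]
        ring
end
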